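/- For the de Sitter universe, a(t) = e^{H₀t} on (0,∞) with H₀ > 0 (so b(t) = (ln t)/H₀, a_inf = 1, σ∞(τ) = e^{2H₀τ}), the following hold for all τ > 0 and 1 ≤ σ < e^{2H₀τ}: ρ_τ(σ) = arccos(1/√σ)/H₀ (so H₀·ρ_τ(σ) < π/2); χ(τ,σ) = √(σ−1)/(H₀ e^{H₀τ}); t(τ,σ) = τ − (ln σ)/(2H₀). Moreover the Fermi-speed expression (ȧ(τ)/2)·[ ∫₁^{σ₀} ḃ(a(τ)/√σ)σ^{−3/2}(σ−1)^{−1/2} dσ + a(τ)∫₁^{σ₀} b̈(a(τ)/√σ)σ^{−2}(σ−1)^{−1/2} dσ − (a(τ)/σ₀)∫₁^{σ₀} b̈(a(τ)/√σ)σ^{−1}(σ−1)^{−1/2} dσ ] evaluates to v_F = √(σ₀−1)/σ₀ = x/(1+x²) with x = H₀ e^{H₀τ} χ(τ,σ₀); in particular v_F ≤ 1/2 for all σ₀, τ and H₀, i.e. comoving test particles recede from the Fermi observer at no more than half the speed of light. -/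

import Mathlib

/-!
For `b = log / H₀` one has `ḃ(a/√s) = √s / (H₀ a)` and `b̈(a/√s) = -s / (H₀ a²)`, so every integrand
in `χ`, `ρ_τ` and `v_F` is a constant multiple of `(s - 1)^{-1/2}` or of `s⁻¹ (s - 1)^{-1/2}`,
whose primitives are `2 √(s - 1)` and `2 arctan √(s - 1)`. The arctangent cancels in `v_F`, leaving
`√(σ - 1) / σ`, and `arctan √(σ - 1) = arccos (1 / √σ)`. The bound `v_F ≤ 1/2` is AM-GM:
`2 √(σ - 1) ≤ 1 + (σ - 1) = σ`.
-/

open Real MeasureTheory Filter Set intervalIntegral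

noncomputable section

/-- Synchronous time along the orthogonal spacelike geodesic: t(τ,σ) = b(a(τ)/√σ). -/
def tF (a b : ℝ → ℝ) (τ σ : ℝ) : ℝ := b (a τ / Real.sqrt σ)

/-- Comoving coordinate along the orthogonal spacelike geodesic:
χ(τ,σ) = (1/2)∫₁^σ ḃ(a(τ)/√s) s^{-1/2}(s-1)^{-1/2} ds. -/
def chiF (a b : ℝ → ℝ) (τ σ : ℝ) : ℝ :=
  (1 / 2) * ∫ s in (1:ℝ)..σ, deriv b (a τ / Real.sqrt s) / (Real.sqrt s * Real.sqrt (s - 1))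

/-- Proper arc length along the orthogonal spacelike geodesic:
ρ_τ(σ) = (a(τ)/2)∫₁^σ ḃ(a(τ)/√s) s^{-3/2}(s-1)^{-1/2} ds. -/
def rhoF (a b : ℝ → ℝ) (τ σ : ℝ) : ℝ :=
  (a τ / 2) *
    ∫ s in (1:ℝ)..σ, deriv b (a τ / Real.sqrt s) / (s * Real.sqrt s * Real.sqrt (s - 1))

/-- The general Fermi-speed expression of Theorem 4 (Eq. (40) of the paper). -/
def vFgen (a b : ℝ → ℝ) (τ σ₀ : ℝ) : ℝ :=
  (deriv a τ / 2) *
    ((∫ σ in (1:ℝ)..σ₀, deriv b (a τ / Real.sqrt σ) / (σ * Real.sqrt σ * Real.sqrt (σ - 1))) +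
      a τ *
        (∫ σ in (1:ℝ)..σ₀, deriv (deriv b) (a τ / Real.sqrt σ) / (σ ^ 2 * Real.sqrt (σ - 1))) -
      (a τ / σ₀) *
        (∫ σ in (1:ℝ)..σ₀, deriv (deriv b) (a τ / Real.sqrt σ) / (σ * Real.sqrt (σ - 1))))

theorem integral_eq_sub_of_hasDerivAt_of_nonneg {F f : ℝ → ℝ} {a b : ℝ} (hab : a ≤ b)
    (hcont : ContinuousOn F (Icc a b)) (hderiv : ∀ x ∈ Ioo a b, HasDerivAt F (f x) x)
    (hpos : ∀ x ∈ Ioo a b, 0 ≤ f x) : ∫ x in a..b, f x = F b - F a := by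
  refine integral_eq_sub_of_hasDerivAt_of_le hab hcont hderiv
    (intervalIntegrable_deriv_of_nonneg (by rwa [uIcc_of_le hab]) ?_ ?_) <;>
  simpa only [min_eq_left hab, max_eq_right hab]

theorem hasDerivAt_sqrt_sub_one {x : ℝ} (hx : 1 < x) :
    HasDerivAt (fun s => √(s - 1)) (1 / (2 * √(x - 1))) x := by
  simpa using ((hasDerivAt_id x).sub_const 1).sqrt (sub_ne_zero.2 hx.ne')

theorem integral_one_div_sqrt_sub_one {σ : ℝ} (hσ : 1 ≤ σ) :
    ∫ s in (1:ℝ)..σ, 1 / √(s - 1) = 2 * √(σ - 1) := by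
  have h := integral_eq_sub_of_hasDerivAt_of_nonneg (F := fun s => 2 * √(s - 1))
    (f := fun s => 1 / √(s - 1)) hσ (by fun_prop) (fun x hx => ?_) (fun x _ => by positivity)
  · simpa using h
  · refine ((hasDerivAt_sqrt_sub_one hx.1).const_mul 2).congr_deriv ?_
    have : √(x - 1) ≠ 0 := (sqrt_pos.2 (sub_pos.2 hx.1)).ne'
    field_simp

theorem integral_one_div_mul_sqrt_sub_one {σ : ℝ} (hσ : 1 ≤ σ) :
    ∫ s in (1:ℝ)..σ, 1 / (s * √(s - 1)) = 2 * arctan √(σ - 1) := by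
  have h := integral_eq_sub_of_hasDerivAt_of_nonneg (F := fun s => 2 * arctan √(s - 1))
    (f := fun s => 1 / (s * √(s - 1))) hσ (by fun_prop) (fun x hx => ?_)
    (fun x hx => by have := hx.1; positivity)
  · simpa using h
  · refine (((hasDerivAt_arctan _).comp x (hasDerivAt_sqrt_sub_one hx.1)).const_mul 2).congr_deriv
      ?_
    have : √(x - 1) ≠ 0 := (sqrt_pos.2 (sub_pos.2 hx.1)).ne'
    rw [sq_sqrt (sub_pos.2 hx.1).le]
    field_simp
    ring

namespace DeSitter

variable (H₀ E : ℝ) {σ : ℝ}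

theorem deriv_b_div_sqrt {s : ℝ} : deriv (fun t => log t / H₀) (E / √s) = √s / (H₀ * E) := by
  rw [deriv_div_const, deriv_log, inv_div, div_div, mul_comm E]

theorem deriv_deriv_b_div_sqrt {s : ℝ} (hs : 0 ≤ s) :
    deriv (deriv fun t => log t / H₀) (E / √s) = -s / (H₀ * E ^ 2) := by
  have : deriv (fun t => log t / H₀) = fun x => x⁻¹ / H₀ := by
    funext x; rw [deriv_div_const, deriv_log]
  rw [this, deriv_div_const, deriv_inv, div_pow, sq_sqrt hs, inv_div]
  ring

theorem integral_chi (hσ : 1 ≤ σ) :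
    ∫ s in (1:ℝ)..σ, deriv (fun t => log t / H₀) (E / √s) / (√s * √(s - 1)) =
      2 * √(σ - 1) / (H₀ * E) := by
  calc _ = ∫ s in (1:ℝ)..σ, 1 / (H₀ * E) * (1 / √(s - 1)) := integral_congr fun s hs => ?_
    _ = _ := by rw [intervalIntegral.integral_const_mul, integral_one_div_sqrt_sub_one hσ]; ring
  have : √s ≠ 0 := (sqrt_pos.2 (by linarith [(uIcc_of_le hσ ▸ hs).1])).ne'
  simp only [deriv_b_div_sqrt]
  field_simp

theorem integral_rho (hσ : 1 ≤ σ) :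
    ∫ s in (1:ℝ)..σ, deriv (fun t => log t / H₀) (E / √s) / (s * √s * √(s - 1)) =
      2 * arctan √(σ - 1) / (H₀ * E) := by
  calc _ = ∫ s in (1:ℝ)..σ, 1 / (H₀ * E) * (1 / (s * √(s - 1))) := integral_congr fun s hs => ?_
    _ = _ := by
      rw [intervalIntegral.integral_const_mul, integral_one_div_mul_sqrt_sub_one hσ]; ring
  have : √s ≠ 0 := (sqrt_pos.2 (by linarith [(uIcc_of_le hσ ▸ hs).1])).ne'
  simp only [deriv_b_div_sqrt]
  field_simp

theorem integral_deriv_deriv_sq (hσ : 1 ≤ σ) :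
    ∫ s in (1:ℝ)..σ, deriv (deriv fun t => log t / H₀) (E / √s) / (s ^ 2 * √(s - 1)) =
      -(2 * arctan √(σ - 1)) / (H₀ * E ^ 2) := by
  calc _ = ∫ s in (1:ℝ)..σ, -(1 / (H₀ * E ^ 2)) * (1 / (s * √(s - 1))) :=
        integral_congr fun s hs => ?_
    _ = _ := by
      rw [intervalIntegral.integral_const_mul, integral_one_div_mul_sqrt_sub_one hσ]; ring
  have hs₀ : 0 < s := by linarith [(uIcc_of_le hσ ▸ hs).1]
  simp only [deriv_deriv_b_div_sqrt H₀ E hs₀.le]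
  field_simp

theorem integral_deriv_deriv (hσ : 1 ≤ σ) :
    ∫ s in (1:ℝ)..σ, deriv (deriv fun t => log t / H₀) (E / √s) / (s * √(s - 1)) =
      -(2 * √(σ - 1)) / (H₀ * E ^ 2) := by
  calc _ = ∫ s in (1:ℝ)..σ, -(1 / (H₀ * E ^ 2)) * (1 / √(s - 1)) :=
        integral_congr fun s hs => ?_
    _ = _ := by rw [intervalIntegral.integral_const_mul, integral_one_div_sqrt_sub_one hσ]; ring
  have hs₀ : 0 < s := by linarith [(uIcc_of_le hσ ▸ hs).1]
  simp only [deriv_deriv_b_div_sqrt H₀ E hs₀.le]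
  field_simp

theorem rhoF_eq (τ : ℝ) (hσ : 1 ≤ σ) :
    rhoF (fun t => exp (H₀ * t)) (fun t => log t / H₀) τ σ = arctan √(σ - 1) / H₀ := by
  have : exp (H₀ * τ) ≠ 0 := (exp_pos _).ne'
  rw [rhoF, integral_rho _ _ hσ]
  field_simp

theorem chiF_eq (τ : ℝ) (hσ : 1 ≤ σ) :
    chiF (fun t => exp (H₀ * t)) (fun t => log t / H₀) τ σ = √(σ - 1) / (H₀ * exp (H₀ * τ)) := by
  rw [chiF, integral_chi _ _ hσ]
  ring

theorem tF_eq (hH : H₀ ≠ 0) (τ : ℝ) (hσ : 0 < σ) :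
    tF (fun t => exp (H₀ * t)) (fun t => log t / H₀) τ σ = τ - log σ / (2 * H₀) := by
  rw [tF, log_div (exp_pos _).ne' (sqrt_pos.2 hσ).ne', log_exp, log_sqrt hσ.le]
  field_simp

theorem vFgen_eq (hH : H₀ ≠ 0) (τ : ℝ) (hσ : 1 ≤ σ) :
    vFgen (fun t => exp (H₀ * t)) (fun t => log t / H₀) τ σ = √(σ - 1) / σ := by
  have hda : deriv (fun t => exp (H₀ * t)) τ = H₀ * exp (H₀ * τ) := by
    simpa [mul_comm] using ((hasDerivAt_id τ).const_mul H₀).exp.deriv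
  have : exp (H₀ * τ) ≠ 0 := (exp_pos _).ne'
  have : σ ≠ 0 := by positivity
  rw [vFgen, hda, integral_rho _ _ hσ, integral_deriv_deriv_sq _ _ hσ, integral_deriv_deriv _ _ hσ]
  field_simp
  ring

end DeSitter

theorem arccos_one_div_sqrt {σ : ℝ} (hσ : 0 < σ) : arccos (1 / √σ) = arctan √(σ - 1) := by
  rw [arccos_eq_arctan (by positivity), div_pow, one_pow, sq_sqrt hσ.le, div_div_eq_mul_div,
    div_one, ← sqrt_mul' _ hσ.le, sub_mul, one_div_mul_cancel hσ.ne', one_mul]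

theorem sqrt_sub_one_div_le_half (σ : ℝ) : √(σ - 1) / σ ≤ 1 / 2 := by
  rcases le_or_gt σ 0 with hσ | hσ
  · exact (div_nonpos_of_nonneg_of_nonpos (sqrt_nonneg _) hσ).trans (by norm_num)
  rw [div_le_iff₀ hσ]
  rcases le_or_gt 1 σ with h1 | h1
  · nlinarith [sq_sqrt (sub_nonneg.2 h1), sq_nonneg (√(σ - 1) - 1)]
  · rw [sqrt_eq_zero_of_nonpos (by linarith)]
    linarith

open DeSitter in
theorem deSitter_universe_general (H₀ : ℝ) (hH : 0 < H₀) (τ σ : ℝ)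
    (hσ1 : 1 ≤ σ) :
    -- ρ_τ(σ) = arccos(1/√σ)/H₀, so H₀·ρ_τ(σ) < π/2
    rhoF (fun t => Real.exp (H₀ * t)) (fun t => Real.log t / H₀) τ σ =
      Real.arccos (1 / Real.sqrt σ) / H₀ ∧
    H₀ * rhoF (fun t => Real.exp (H₀ * t)) (fun t => Real.log t / H₀) τ σ < π / 2 ∧
    -- χ(τ,σ) = √(σ-1)/(H₀e^{H₀τ})
    chiF (fun t => Real.exp (H₀ * t)) (fun t => Real.log t / H₀) τ σ =
      Real.sqrt (σ - 1) / (H₀ * Real.exp (H₀ * τ)) ∧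
    -- t(τ,σ) = τ - (ln σ)/(2H₀)
    tF (fun t => Real.exp (H₀ * t)) (fun t => Real.log t / H₀) τ σ =
      τ - Real.log σ / (2 * H₀) ∧
    -- the Fermi-speed expression evaluates to √(σ-1)/σ
    vFgen (fun t => Real.exp (H₀ * t)) (fun t => Real.log t / H₀) τ σ =
      Real.sqrt (σ - 1) / σ ∧
    -- = x/(1+x²) with x = H₀e^{H₀τ}·χ(τ,σ)
    Real.sqrt (σ - 1) / σ =
      (H₀ * Real.exp (H₀ * τ) *
          chiF (fun t => Real.exp (H₀ * t)) (fun t => Real.log t / H₀) τ σ) /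
        (1 + (H₀ * Real.exp (H₀ * τ) *
          chiF (fun t => Real.exp (H₀ * t)) (fun t => Real.log t / H₀) τ σ) ^ 2) ∧
    -- v_F ≤ 1/2: comoving particles recede at no more than half the speed of light
    vFgen (fun t => Real.exp (H₀ * t)) (fun t => Real.log t / H₀) τ σ ≤ 1 / 2 := by
  have hσ0 : 0 < σ := by linarith
  refine ⟨by rw [rhoF_eq _ _ hσ1, arccos_one_div_sqrt hσ0], ?_, chiF_eq _ _ hσ1,
    tF_eq _ hH.ne' _ hσ0, vFgen_eq _ hH.ne' _ hσ1, ?_,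
    (vFgen_eq _ hH.ne' _ hσ1).trans_le (sqrt_sub_one_div_le_half σ)⟩
  · rw [rhoF_eq _ _ hσ1, mul_div_cancel₀ _ hH.ne']
    exact arctan_lt_pi_div_two _
  · rw [chiF_eq _ _ hσ1, mul_div_cancel₀ _ (by positivity), sq_sqrt (sub_nonneg.2 hσ1),
      add_sub_cancel]

/-- the de Sitter universe a(t) = e^{H₀t}, b(t) = (ln t)/H₀:
explicit formulas for ρ_τ(σ), χ(τ,σ), t(τ,σ) on 1 ≤ σ < e^{2H₀τ}, and the Fermi
relative speed v_F = √(σ-1)/σ = x/(1+x²) ≤ 1/2 with x = H₀e^{H₀τ}χ(τ,σ). -/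
theorem deSitter_universe (H₀ : ℝ) (hH : 0 < H₀) (τ σ : ℝ) (hτ : 0 < τ)
    (hσ1 : 1 ≤ σ) (hσ2 : σ < Real.exp (2 * H₀ * τ)) :
    -- ρ_τ(σ) = arccos(1/√σ)/H₀, so H₀·ρ_τ(σ) < π/2
    rhoF (fun t => Real.exp (H₀ * t)) (fun t => Real.log t / H₀) τ σ =
      Real.arccos (1 / Real.sqrt σ) / H₀ ∧
    H₀ * rhoF (fun t => Real.exp (H₀ * t)) (fun t => Real.log t / H₀) τ σ < π / 2 ∧
    -- χ(τ,σ) = √(σ-1)/(H₀e^{H₀τ})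
    chiF (fun t => Real.exp (H₀ * t)) (fun t => Real.log t / H₀) τ σ =
      Real.sqrt (σ - 1) / (H₀ * Real.exp (H₀ * τ)) ∧
    -- t(τ,σ) = τ - (ln σ)/(2H₀)
    tF (fun t => Real.exp (H₀ * t)) (fun t => Real.log t / H₀) τ σ =
      τ - Real.log σ / (2 * H₀) ∧
    -- the Fermi-speed expression evaluates to √(σ-1)/σ
    vFgen (fun t => Real.exp (H₀ * t)) (fun t => Real.log t / H₀) τ σ =
      Real.sqrt (σ - 1) / σ ∧
    -- = x/(1+x²) with x = H₀e^{H₀τ}·χ(τ,σ)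
    Real.sqrt (σ - 1) / σ =
      (H₀ * Real.exp (H₀ * τ) *
          chiF (fun t => Real.exp (H₀ * t)) (fun t => Real.log t / H₀) τ σ) /
        (1 + (H₀ * Real.exp (H₀ * τ) *
          chiF (fun t => Real.exp (H₀ * t)) (fun t => Real.log t / H₀) τ σ) ^ 2) ∧
    -- v_F ≤ 1/2: comoving particles recede at no more than half the speed of light
    vFgen (fun t => Real.exp (H₀ * t)) (fun t => Real.log t / H₀) τ σ ≤ 1 / 2 :=
  deSitter_universe_general H₀ hH τ σ hσ1
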